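/- For every n ≥ 1, the diagonal functor δ : Δ → Δⁿ is aspherical; that is, for every object ([p_1], …, [p_n]) of Δⁿ, the comma category δ/([p_1], …, [p_n]) is aspherical. -/

import Mathlib

/-!
The comma category `δ/P` contracts onto a point. Appending a new top vertex to `⦋m⦌` and
sending it to the last vertex of every `P i` is an endofunctor `C` of `δ/P` which receives
natural transformations both from the identity (the inclusion `⦋m⦌ ⟶ ⦋m + 1⦌`) and from
the constant functor at the apex `(⦋0⦌, last vertices)` (the new vertex). A natural
transformation induces a simplicial homotopy between the nerve maps, so the nerve of `δ/P`
is homotopy equivalent to a point, and a homotopy equivalence induces bijections on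
homotopy classes of maps into any Kan complex.
-/

open CategoryTheory CategoryTheory.Limits Simplicial

universe w v u v₁ u₁ v₂ u₂

namespace Paper

/-- The map `X ⟶ Δ[1]` constant at vertex `ε`. -/
def vertexMap (X : SSet.{u}) (ε : Fin 2) : X ⟶ Δ[1] where
  app m := TypeCat.ofHom fun _ => SSet.stdSimplex.const 1 ε m
  naturality := by
    intro m m' f
    rfl

/-- Two maps of simplicial sets `f g : X ⟶ K` are directly homotopic if there is a
homotopy `X ⨯ Δ[1] ⟶ K` from `f` to `g`. -/
def DHomotopic {X K : SSet.{u}} (f g : X ⟶ K) : Prop :=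
  ∃ H : (X ⨯ Δ[1] : SSet.{u}) ⟶ K,
    prod.lift (𝟙 X) (vertexMap X 0) ≫ H = f ∧ prod.lift (𝟙 X) (vertexMap X 1) ≫ H = g

lemma DHomotopic.precomp {X Y K : SSet.{u}} (f : X ⟶ Y) {g g' : Y ⟶ K}
    (h : DHomotopic g g') : DHomotopic (f ≫ g) (f ≫ g') := by
  obtain ⟨H, h0, h1⟩ := h
  have key : ∀ ε : Fin 2, f ≫ vertexMap Y ε = vertexMap X ε := by
    intro ε
    apply SSet.hom_ext
    intro n
    rfl
  have e : ∀ ε : Fin 2, prod.lift (𝟙 X) (vertexMap X ε) ≫ prod.map f (𝟙 Δ[1]) =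
      f ≫ prod.lift (𝟙 Y) (vertexMap Y ε) := by
    intro ε
    apply Limits.prod.hom_ext
    · simp [key ε]
    · simp [key ε]
  refine ⟨prod.map f (𝟙 _) ≫ H, ?_, ?_⟩
  · rw [← Category.assoc, e 0, Category.assoc, h0]
  · rw [← Category.assoc, e 1, Category.assoc, h1]

/-- Homotopy classes of maps `X ⟶ K`: the quotient of `X ⟶ K` by the equivalence
relation generated by direct homotopy. -/
def HClass (X K : SSet.{u}) : Type u :=
  Quot (@DHomotopic X K)

/-- Precomposition on homotopy classes. -/
def precompHC {X Y K : SSet.{u}} (f : X ⟶ Y) : HClass Y K → HClass X K :=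
  Quot.map (fun g => f ≫ g) (fun _ _ h => h.precomp f)

/-- A map of simplicial sets is a weak homotopy equivalence (in the Kan-Quillen sense)
iff for every Kan complex `K`, precomposition induces a bijection on homotopy classes. -/
def IsWeakHomotopyEquiv {X Y : SSet.{u}} (f : X ⟶ Y) : Prop :=
  ∀ K : SSet.{u}, SSet.KanComplex K → Function.Bijective (precompHC (K := K) f)

/-- The nerve of a category, `ULift`ed so that nerves of categories in different universes
can be compared. -/
def nerveUp (A : Type u₁) [Category.{v₁} A] : SSet.{max w u₁ v₁} :=
  nerve A ⋙ CategoryTheory.uliftFunctor.{w, max u₁ v₁}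

/-- The map induced by a functor on (`ULift`ed) nerves. -/
def nerveUpMap {A : Type u₁} [Category.{v₁} A] {B : Type u₂} [Category.{v₂} B]
    (F : A ⥤ B) : nerveUp.{max u₂ v₂} A ⟶ nerveUp.{max u₁ v₁} B where
  app _ := TypeCat.ofHom fun x => ⟨x.down ⋙ F⟩
  naturality := fun _ _ _ => rfl

/-- A functor is a Thomason equivalence if its nerve is a weak homotopy equivalence of
simplicial sets. -/
def IsThomasonEquiv {A : Type u₁} [Category.{v₁} A] {B : Type u₂} [Category.{v₂} B]
    (F : A ⥤ B) : Prop :=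
  IsWeakHomotopyEquiv (nerveUpMap F)

/-- A category is aspherical if its nerve is weakly contractible, i.e. the unique map
from its nerve to the terminal simplicial set is a weak homotopy equivalence. -/
def Aspherical (A : Type u₁) [Category.{v₁} A] : Prop :=
  IsWeakHomotopyEquiv (terminal.from (nerve A))

/-- A functor `u : A ⥤ B` is aspherical if all the comma categories `u/b` are aspherical. -/
def AsphericalFunctor {A : Type u₁} [Category.{v₁} A] {B : Type u₂} [Category.{v₂} B]
    (u : A ⥤ B) : Prop :=
  ∀ b : B, Aspherical (CostructuredArrow u b)


/-- The diagonal functor `Δ ⥤ Δⁿ`. -/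
def diagFunctor (n : ℕ) : SimplexCategory ⥤ (Fin n → SimplexCategory) :=
  Functor.pi' fun _ => 𝟭 _

open MonoidalCategory CartesianMonoidalCategory

lemma dHomotopic_ι₀_comp_ι₁_comp {X K : SSet.{u}} (H : X ⊗ Δ[1] ⟶ K) :
    DHomotopic (SSet.ι₀ ≫ H) (SSet.ι₁ ≫ H) := by
  -- `X ⊗ Δ[1]` is also a product of `X` and `Δ[1]`, so `H` transports to `X ⨯ Δ[1]`
  refine ⟨lift prod.fst prod.snd ≫ H, ?_, ?_⟩ <;>
  · rw [← Category.assoc, comp_lift, prod.lift_fst, prod.lift_snd]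
    rfl

lemma precompHC_id {X K : SSet.{u}} : precompHC (K := K) (𝟙 X) = id := by
  ext ⟨g⟩
  exact congrArg (Quot.mk _) (Category.id_comp g)

lemma precompHC_comp {X Y Z K : SSet.{u}} (f : X ⟶ Y) (g : Y ⟶ Z) :
    precompHC (K := K) (f ≫ g) = precompHC f ∘ precompHC g := by
  ext ⟨h⟩
  exact congrArg (Quot.mk _) (Category.assoc f g h)

lemma precompHC_eq_of_dHomotopic {X Y K : SSet.{u}} {f g : X ⟶ Y} (hfg : DHomotopic f g) :
    precompHC (K := K) f = precompHC g := by
  obtain ⟨H, h₀, h₁⟩ := hfg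
  ext ⟨k⟩
  refine Quot.sound ⟨H ≫ k, ?_, ?_⟩
  · rw [← Category.assoc, h₀]
  · rw [← Category.assoc, h₁]

lemma precompHC_eq_of_eqvGen {X Y K : SSet.{u}} {f g : X ⟶ Y}
    (hfg : Relation.EqvGen DHomotopic f g) : precompHC (K := K) f = precompHC g := by
  induction hfg with
  | rel _ _ h => exact precompHC_eq_of_dHomotopic h
  | refl => rfl
  | symm _ _ _ ih => exact ih.symm
  | trans _ _ _ _ _ ih₁ ih₂ => exact ih₁.trans ih₂

lemma isWeakHomotopyEquiv_of_homotopyInverse {X Y : SSet.{u}} (f : X ⟶ Y) (g : Y ⟶ X)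
    (hfg : Relation.EqvGen DHomotopic (f ≫ g) (𝟙 X))
    (hgf : Relation.EqvGen DHomotopic (g ≫ f) (𝟙 Y)) : IsWeakHomotopyEquiv f := by
  intro K _
  have hgf' : precompHC (K := K) g ∘ precompHC f = id := by
    rw [← precompHC_comp, precompHC_eq_of_eqvGen hgf, precompHC_id]
  have hfg' : precompHC (K := K) f ∘ precompHC g = id := by
    rw [← precompHC_comp, precompHC_eq_of_eqvGen hfg, precompHC_id]
  exact Function.bijective_iff_has_inverse.mpr ⟨precompHC g, congrFun hgf', congrFun hfg'⟩

section Nerve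

variable {A B : Type u} [Category.{v} A] [Category.{v} B]

lemma _root_.CategoryTheory.Functor.prod'_const_comp_uncurry {J : Type*} [Category J]
    (Φ : Fin 2 ⥤ (A ⥤ B)) (ε : Fin 2) (x : J ⥤ A) :
    Functor.prod' ((Functor.const J).obj ε) x ⋙ Functor.uncurry.obj Φ = x ⋙ Φ.obj ε :=
  CategoryTheory.Functor.ext (fun _ => rfl) (fun _ _ f => by simp)

def nerveHomotopy (Φ : Fin 2 ⥤ (A ⥤ B)) : nerve A ⊗ Δ[1] ⟶ nerve B where
  app _ := TypeCat.ofHom fun p =>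
    Functor.prod' p.2.down.toOrderHom.monotone.functor p.1 ⋙ Functor.uncurry.obj Φ

lemma dHomotopic_nerveMap_obj_zero_one (Φ : Fin 2 ⥤ (A ⥤ B)) :
    DHomotopic (nerveMap (Φ.obj 0)) (nerveMap (Φ.obj 1)) := by
  convert dHomotopic_ι₀_comp_ι₁_comp (nerveHomotopy Φ) using 1 <;> ext m x <;>
    exact (Functor.prod'_const_comp_uncurry Φ _ x).symm

lemma dHomotopic_nerveMap {F G : A ⥤ B} (α : F ⟶ G) : DHomotopic (nerveMap F) (nerveMap G) :=
  dHomotopic_nerveMap_obj_zero_one (ComposableArrows.mk₁ α)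

theorem aspherical_of_natTrans {C : A ⥤ A} (x₀ : A) (α : 𝟭 A ⟶ C)
    (β : (Functor.const A).obj x₀ ⟶ C) : Aspherical A := by
  refine isWeakHomotopyEquiv_of_homotopyInverse _ (SSet.const (ComposableArrows.mk₀ x₀)) ?_ ?_
  · exact .trans _ _ _ (.rel _ _ (dHomotopic_nerveMap β))
      (.symm _ _ (.rel _ _ (dHomotopic_nerveMap α)))
  · rw [terminalIsTerminal.hom_ext (_ ≫ terminal.from _) (𝟙 _)]
    exact .refl _

end Nerve

end Paper

namespace SimplexCategory

def extendLast {m : ℕ} {p : SimplexCategory} (f : ⦋m⦌ ⟶ p) : ⦋m + 1⦌ ⟶ p :=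
  Hom.mk ⟨Fin.lastCases (Fin.last _) f.toOrderHom, by
    intro i j hij
    induction j using Fin.lastCases with
    | last => induction i using Fin.lastCases <;> simp [Fin.le_last]
    | cast j =>
      induction i using Fin.lastCases with
      | last => exact absurd hij (by simp)
      | cast i => simpa using f.toOrderHom.monotone (Fin.castSucc_le_castSucc_iff.mp hij)⟩

variable {m : ℕ} {p : SimplexCategory} (f : ⦋m⦌ ⟶ p)

@[simp]
lemma extendLast_last : (extendLast f).toOrderHom (Fin.last (m + 1)) = Fin.last _ := by
  simp only [extendLast, Hom.toOrderHom_mk]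
  exact Fin.lastCases_last (motive := fun _ => Fin (p.len + 1))

@[simp]
lemma extendLast_castSucc (j : Fin (m + 1)) :
    (extendLast f).toOrderHom j.castSucc = f.toOrderHom j := by
  simp only [extendLast, Hom.toOrderHom_mk]
  exact Fin.lastCases_castSucc (motive := fun _ => Fin (p.len + 1)) j

@[simp]
lemma δ_last_comp_extendLast : δ (Fin.last (m + 1)) ≫ extendLast f = f := by
  ext j : 3
  simp [δ]

@[simp]
lemma const_last_comp_extendLast (x : SimplexCategory) :
    const x ⦋m + 1⦌ (Fin.last (m + 1)) ≫ extendLast f = const x p (Fin.last _) := by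
  simp

def cone : SimplexCategory ⥤ SimplexCategory where
  obj X := ⦋X.len + 1⦌
  map g := extendLast (g ≫ δ (Fin.last _))
  map_id _ := by
    ext j : 3
    induction j using Fin.lastCases <;> simp [δ]
  map_comp g h := by
    ext j : 3
    induction j using Fin.lastCases <;> simp [δ]

lemma cone_map_comp_extendLast {n : ℕ} (g : ⦋n⦌ ⟶ ⦋m⦌) :
    cone.map g ≫ extendLast f = extendLast (g ≫ f) := by
  change extendLast (g ≫ δ _) ≫ extendLast f = _
  ext j : 3
  induction j using Fin.lastCases <;> simp [δ]

end SimplexCategory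

namespace Paper

open SimplexCategory

abbrev DiagComma (ι : Type*) (P : ι → SimplexCategory) :=
  CostructuredArrow (Functor.pi' fun _ : ι => 𝟭 SimplexCategory) P

namespace DiagComma

variable {ι : Type*} (P : ι → SimplexCategory)

def cone : DiagComma ι P ⥤ DiagComma ι P where
  obj X := CostructuredArrow.mk (Y := SimplexCategory.cone.obj X.left)
    fun i => extendLast (X.hom i)
  map {_ Y} g := CostructuredArrow.homMk (SimplexCategory.cone.map g.left) <| funext fun i =>
    (cone_map_comp_extendLast (Y.hom i) g.left).trans
      (congrArg extendLast (congrFun (CostructuredArrow.w g) i))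
  map_id _ := CostructuredArrow.hom_ext _ _ (SimplexCategory.cone.map_id _)
  map_comp _ _ := CostructuredArrow.hom_ext _ _ (SimplexCategory.cone.map_comp _ _)

def apex : DiagComma ι P :=
  CostructuredArrow.mk (Y := ⦋0⦌) fun i => const ⦋0⦌ (P i) (Fin.last _)

def toCone : 𝟭 (DiagComma ι P) ⟶ cone P where
  app X := CostructuredArrow.homMk (δ (Fin.last _)) <| funext fun i =>
    δ_last_comp_extendLast (X.hom i)
  naturality _ _ g := CostructuredArrow.hom_ext _ _ (δ_last_comp_extendLast (g.left ≫ δ _)).symm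

def apexToCone : (Functor.const (DiagComma ι P)).obj (apex P) ⟶ cone P where
  app X := CostructuredArrow.homMk (const ⦋0⦌ _ (Fin.last _)) <| funext fun i =>
    const_last_comp_extendLast (X.hom i) _
  naturality _ _ g := CostructuredArrow.hom_ext _ _
    ((Category.id_comp _).trans (const_last_comp_extendLast (g.left ≫ δ _) _).symm)

end DiagComma

theorem diagFunctor_aspherical_general (n : ℕ) :
    ∀ P : Fin n → SimplexCategory, Aspherical (CostructuredArrow (diagFunctor n) P) :=
  fun P => aspherical_of_natTrans (DiagComma.apex P) (DiagComma.toCone P) (DiagComma.apexToCone P)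

/-- For every `n ≥ 1`, the diagonal functor `δ : Δ ⥤ Δⁿ` is aspherical; that is, for every
object `([p_1], …, [p_n])` of `Δⁿ`, the comma category `δ/([p_1], …, [p_n])` is aspherical. -/
theorem diagFunctor_aspherical (n : ℕ) (hn : 1 ≤ n) :
    ∀ P : Fin n → SimplexCategory, Aspherical (CostructuredArrow (diagFunctor n) P) :=
  diagFunctor_aspherical_general n

end Paper
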